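/- arXiv:1804.01968 — 3 statements merged into one kernel-verified Lean document; each statement's English description precedes it below -/
import Mathlib

section
/- Let l₁,l₂,l₃,n₁,n₂,n₃ be nonnegative integers with n_i ≤ min(l_{i+1}, l_{i+2}) for all i (indices mod 3). Define, for each i, M_i := 1 + l_i + max(0, ⌊(n_i - max(n_{i+1}, n_{i+2}))/2⌋) and d_i := 1 + l_{i+1} + l_{i+2} - n_i. Then for each i one has max(M_{i+1}, M_{i+2}) ≤ d_i ≤ M_{i+1} + M_{i+2} and d_{i+1} + d_{i+2} ≤ 2 M_i + d_i + 1. -/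
/-!
Write `m_i = max(0, ⌊(n_i - max(n_{i+1}, n_{i+2}))/2⌋)`. Halving a nonnegative excess does not
increase it, so `m_{i+1} + n_i ≤ max(n_i, n_{i+1}) ≤ l_{i+2}`, which is `M_{i+1} ≤ d_i`; rounding
down loses at most one, so `n_i - n_{i+1} - n_{i+2} ≤ n_i - max(n_{i+1}, n_{i+2}) ≤ 2 m_i + 1`,
which is (T₂). The upper bound `d_i ≤ M_{i+1} + M_{i+2}` only needs `n_i ≥ 0`.
-/

lemma max_zero_fdiv_two_le_max_zero (k : ℤ) : max 0 (k.fdiv 2) ≤ max 0 k := by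
  rw [Int.fdiv_eq_ediv_of_nonneg _ (by norm_num)]
  omega

lemma le_two_mul_max_zero_fdiv_two_add_one (k : ℤ) : k ≤ 2 * max 0 (k.fdiv 2) + 1 := by
  rw [Int.fdiv_eq_ediv_of_nonneg _ (by norm_num)]
  omega

lemma max_zero_fdiv_two_sub_add_le {x a z : ℤ} (hz : z ≤ a) :
    max 0 ((x - a).fdiv 2) + z ≤ max x z := by
  have := max_zero_fdiv_two_le_max_zero (x - a)
  omega

lemma sub_sub_le_two_mul_max_zero_fdiv_two_add_one {x y z : ℤ} (hy : 0 ≤ y) (hz : 0 ≤ z) :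
    x - y - z ≤ 2 * max 0 ((x - max y z).fdiv 2) + 1 := by
  have := le_two_mul_max_zero_fdiv_two_add_one (x - max y z)
  omega

/-- `sigmaM l_i n_i n_{i+1} n_{i+2} = M_i` and `sigmaD l_{i+1} l_{i+2} n_i = d_i`. -/
def sigmaM (l n n' n'' : ℤ) : ℤ := 1 + l + max 0 ((n - max n' n'').fdiv 2)

def sigmaD (l' l'' n : ℤ) : ℤ := 1 + l' + l'' - n

section

variable {l l' l'' n n' n'' : ℤ}

lemma sigmaM_le_sigmaD_of_le_left (h : n ≤ l'') (h' : n' ≤ l'') :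
    sigmaM l' n' n'' n ≤ sigmaD l' l'' n := by
  have := max_zero_fdiv_two_sub_add_le (x := n') (le_max_right n'' n)
  unfold sigmaM sigmaD
  omega

lemma sigmaM_le_sigmaD_of_le_right (h : n ≤ l') (h'' : n'' ≤ l') :
    sigmaM l'' n'' n n' ≤ sigmaD l' l'' n := by
  have := max_zero_fdiv_two_sub_add_le (x := n'') (le_max_left n n')
  unfold sigmaM sigmaD
  omega

lemma sigmaD_le_sigmaM_add_sigmaM (hn : 0 ≤ n) :
    sigmaD l' l'' n ≤ sigmaM l' n' n'' n + sigmaM l'' n'' n n' := by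
  unfold sigmaM sigmaD
  omega

lemma sigmaD_add_sigmaD_le (hn' : 0 ≤ n') (hn'' : 0 ≤ n'') :
    sigmaD l'' l n' + sigmaD l l' n'' ≤ 2 * sigmaM l n n' n'' + sigmaD l' l'' n + 1 := by
  have := sub_sub_le_two_mul_max_zero_fdiv_two_add_one (x := n) hn' hn''
  unfold sigmaM sigmaD
  omega

lemma sigma_conditions (hn : 0 ≤ n) (hn' : 0 ≤ n') (hn'' : 0 ≤ n'')
    (h : n ≤ min l' l'') (h' : n' ≤ min l'' l) (h'' : n'' ≤ min l l') :
    (max (sigmaM l' n' n'' n) (sigmaM l'' n'' n n') ≤ sigmaD l' l'' n ∧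
      sigmaD l' l'' n ≤ sigmaM l' n' n'' n + sigmaM l'' n'' n n') ∧
    sigmaD l'' l n' + sigmaD l l' n'' ≤ 2 * sigmaM l n n' n'' + sigmaD l' l'' n + 1 := by
  simp only [le_min_iff] at h h' h''
  exact ⟨⟨max_le (sigmaM_le_sigmaD_of_le_left h.2 h'.1) (sigmaM_le_sigmaD_of_le_right h.1 h''.2),
    sigmaD_le_sigmaM_add_sigmaM hn⟩, sigmaD_add_sigmaD_le hn' hn''⟩

end

theorem stmt_7_general (l1 l2 l3 n1 n2 n3 : ℤ)
    (hn1 : 0 ≤ n1) (hn2 : 0 ≤ n2) (hn3 : 0 ≤ n3)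
    (h1 : n1 ≤ min l2 l3) (h2 : n2 ≤ min l3 l1) (h3 : n3 ≤ min l1 l2)
    (M1 M2 M3 d1 d2 d3 : ℤ)
    (hM1 : M1 = 1 + l1 + max 0 (Int.fdiv (n1 - max n2 n3) 2))
    (hM2 : M2 = 1 + l2 + max 0 (Int.fdiv (n2 - max n3 n1) 2))
    (hM3 : M3 = 1 + l3 + max 0 (Int.fdiv (n3 - max n1 n2) 2))
    (hd1 : d1 = 1 + l2 + l3 - n1)
    (hd2 : d2 = 1 + l3 + l1 - n2)
    (hd3 : d3 = 1 + l1 + l2 - n3) :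
    (max M2 M3 ≤ d1 ∧ d1 ≤ M2 + M3) ∧
    (max M3 M1 ≤ d2 ∧ d2 ≤ M3 + M1) ∧
    (max M1 M2 ≤ d3 ∧ d3 ≤ M1 + M2) ∧
    (d2 + d3 ≤ 2 * M1 + d1 + 1) ∧
    (d3 + d1 ≤ 2 * M2 + d2 + 1) ∧
    (d1 + d2 ≤ 2 * M3 + d3 + 1) := by
  subst hM1 hM2 hM3 hd1 hd2 hd3
  have c1 := sigma_conditions hn1 hn2 hn3 h1 h2 h3
  have c2 := sigma_conditions hn2 hn3 hn1 h2 h3 h1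
  have c3 := sigma_conditions hn3 hn1 hn2 h3 h1 h2
  exact ⟨c1.1, c2.1, c3.1, c1.2, c2.2, c3.2⟩

theorem stmt_7 (l1 l2 l3 n1 n2 n3 : ℤ)
    (hl1 : 0 ≤ l1) (hl2 : 0 ≤ l2) (hl3 : 0 ≤ l3)
    (hn1 : 0 ≤ n1) (hn2 : 0 ≤ n2) (hn3 : 0 ≤ n3)
    (h1 : n1 ≤ min l2 l3) (h2 : n2 ≤ min l3 l1) (h3 : n3 ≤ min l1 l2)
    (M1 M2 M3 d1 d2 d3 : ℤ)
    (hM1 : M1 = 1 + l1 + max 0 (Int.fdiv (n1 - max n2 n3) 2))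
    (hM2 : M2 = 1 + l2 + max 0 (Int.fdiv (n2 - max n3 n1) 2))
    (hM3 : M3 = 1 + l3 + max 0 (Int.fdiv (n3 - max n1 n2) 2))
    (hd1 : d1 = 1 + l2 + l3 - n1)
    (hd2 : d2 = 1 + l3 + l1 - n2)
    (hd3 : d3 = 1 + l1 + l2 - n3) :
    (max M2 M3 ≤ d1 ∧ d1 ≤ M2 + M3) ∧
    (max M3 M1 ≤ d2 ∧ d2 ≤ M3 + M1) ∧
    (max M1 M2 ≤ d3 ∧ d3 ≤ M1 + M2) ∧
    (d2 + d3 ≤ 2 * M1 + d1 + 1) ∧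
    (d3 + d1 ≤ 2 * M2 + d2 + 1) ∧
    (d1 + d2 ≤ 2 * M3 + d3 + 1) :=
  stmt_7_general l1 l2 l3 n1 n2 n3 hn1 hn2 hn3 h1 h2 h3 M1 M2 M3 d1 d2 d3 hM1 hM2 hM3 hd1 hd2 hd3
end

section
/- Let τ = (a,b,c,d,e,f) and τ' = (a',b',c',d',e',f') be two sextuples of nonnegative integers, both satisfying condition (T₁) (i.e., max(b,c) ≤ d ≤ b+c, max(a,c) ≤ e ≤ a+c, max(a,b) ≤ f ≤ a+b, and similarly for τ'). If the sets P_τ and P_{τ'} are equal, where P_τ is the set of triples (x,y,z) of nonnegative integers with x ≤ a, y ≤ b, z ≤ c, y+z ≤ d, x+z ≤ e, x+y ≤ f, then τ = τ'. -/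
def latticePolytope (a b c d e f : ℕ) : Set (ℕ × ℕ × ℕ) :=
  {p | p.1 ≤ a ∧ p.2.1 ≤ b ∧ p.2.2 ≤ c ∧
       p.2.1 + p.2.2 ≤ d ∧ p.1 + p.2.2 ≤ e ∧ p.1 + p.2.1 ≤ f}

/-! Under (T₁) the six bounds are all attained on `P_τ`: `a`, `b`, `c` at the vertices on the axes,
and `d`, `e`, `f` at the points `(0, d - c, c)`, `(e - c, 0, c)`, `(f - b, b, 0)`. Hence
`P_τ ⊆ P_τ'` forces `τ ≤ τ'` coordinatewise, and equality of the polytopes gives `τ = τ'`. -/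

theorem mem_latticePolytope {a b c d e f x y z : ℕ} :
    (x, y, z) ∈ latticePolytope a b c d e f ↔
      x ≤ a ∧ y ≤ b ∧ z ≤ c ∧ y + z ≤ d ∧ x + z ≤ e ∧ x + y ≤ f :=
  Iff.rfl

theorem le_of_latticePolytope_subset {a b c d e f a' b' c' d' e' f' : ℕ}
    (hd : max b c ≤ d ∧ d ≤ b + c) (he : max a c ≤ e ∧ e ≤ a + c)
    (hf : max a b ≤ f ∧ f ≤ a + b)
    (h : latticePolytope a b c d e f ⊆ latticePolytope a' b' c' d' e' f') :
    a ≤ a' ∧ b ≤ b' ∧ c ≤ c' ∧ d ≤ d' ∧ e ≤ e' ∧ f ≤ f' := by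
  simp only [max_le_iff] at hd he hf
  have mem : ∀ x y z : ℕ, x ≤ a ∧ y ≤ b ∧ z ≤ c ∧ y + z ≤ d ∧ x + z ≤ e ∧ x + y ≤ f →
      x ≤ a' ∧ y ≤ b' ∧ z ≤ c' ∧ y + z ≤ d' ∧ x + z ≤ e' ∧ x + y ≤ f' :=
    fun x y z hp => mem_latticePolytope.mp (h (mem_latticePolytope.mpr hp))
  have ha := mem a 0 0 (by omega)
  have hb := mem 0 b 0 (by omega)
  have hc := mem 0 0 c (by omega)
  have hd' := mem 0 (d - c) c (by omega)
  have he' := mem (e - c) 0 c (by omega)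
  have hf' := mem (f - b) b 0 (by omega)
  omega

theorem stmt_11 (a b c d e f a' b' c' d' e' f' : ℕ)
    (hd : max b c ≤ d ∧ d ≤ b + c)
    (he : max a c ≤ e ∧ e ≤ a + c)
    (hf : max a b ≤ f ∧ f ≤ a + b)
    (hd' : max b' c' ≤ d' ∧ d' ≤ b' + c')
    (he' : max a' c' ≤ e' ∧ e' ≤ a' + c')
    (hf' : max a' b' ≤ f' ∧ f' ≤ a' + b')
    (hP : latticePolytope a b c d e f = latticePolytope a' b' c' d' e' f') :
    a = a' ∧ b = b' ∧ c = c' ∧ d = d' ∧ e = e' ∧ f = f' := by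
  have hle := le_of_latticePolytope_subset hd he hf hP.le
  have hge := le_of_latticePolytope_subset hd' he' hf' hP.ge
  omega
end

section
/- Let μ₁,μ₂,μ₃ be nonnegative integers and δ₁,δ₂,δ₃ positive integers satisfying conditions (T₁) and (T₂). Define ν_i = μ_{i+1}+μ_{i+2}-δ_i, and suppose ν₃ ≤ ν₂ ≤ ν₁. Then exactly one of the following four cases holds: (i) ν₂ < ν₁ ≤ μ₁+ν₂; (ii) ν₁ = ν₂ and ν₃ ≥ 1; (iii) ν₁ = ν₂, ν₃ = 0; (iv) ν₁ > μ₁+ν₂; and in case (iv) one has ν₁ = 2μ₁+1, ν₂ = ν₃ = μ₁. -/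
/-!
In terms of the `νᵢ`, condition (T₁) says `0 ≤ νᵢ ≤ min(μᵢ₊₁, μᵢ₊₂)` and condition (T₂) says
`νᵢ ≤ νᵢ₊₁ + νᵢ₊₂ + 1`. Given `ν₂ ≤ ν₁`, the four cases split first on whether `ν₁ = ν₂`, so they
are exclusive and, as `ν₃ ≥ 0`, exhaustive. In case (iv), `μ₁ + ν₂ < ν₁ ≤ ν₂ + ν₃ + 1` forces
`μ₁ ≤ ν₃ ≤ ν₂ ≤ μ₁`, and then `2μ₁ < ν₁ ≤ 2μ₁ + 1`.
-/

lemma cases_exactly_one {m ν1 ν2 ν3 : ℤ} (hm : 0 ≤ m) (hν3 : 0 ≤ ν3) (h21 : ν2 ≤ ν1) :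
    ((ν2 < ν1 ∧ ν1 ≤ m + ν2) ∧ ¬(ν1 = ν2 ∧ 1 ≤ ν3) ∧ ¬(ν1 = ν2 ∧ ν3 = 0) ∧ ¬(m + ν2 < ν1)) ∨
    (¬(ν2 < ν1 ∧ ν1 ≤ m + ν2) ∧ (ν1 = ν2 ∧ 1 ≤ ν3) ∧ ¬(ν1 = ν2 ∧ ν3 = 0) ∧ ¬(m + ν2 < ν1)) ∨
    (¬(ν2 < ν1 ∧ ν1 ≤ m + ν2) ∧ ¬(ν1 = ν2 ∧ 1 ≤ ν3) ∧ (ν1 = ν2 ∧ ν3 = 0) ∧ ¬(m + ν2 < ν1)) ∨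
    (¬(ν2 < ν1 ∧ ν1 ≤ m + ν2) ∧ ¬(ν1 = ν2 ∧ 1 ≤ ν3) ∧ ¬(ν1 = ν2 ∧ ν3 = 0) ∧ (m + ν2 < ν1)) := by
  rcases h21.lt_or_eq with hlt | heq
  · rcases le_or_gt ν1 (m + ν2) with hle | hgt
    · left; omega
    · right; right; right; omega
  · rcases hν3.lt_or_eq with hpos | hzero
    · right; left; omega
    · right; right; left; omega

lemma eq_two_mul_add_one_of_add_lt {m ν1 ν2 ν3 : ℤ} (h2m : ν2 ≤ m) (h32 : ν3 ≤ ν2)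
    (hT2 : ν1 ≤ ν2 + ν3 + 1) (h : m + ν2 < ν1) :
    ν1 = 2 * m + 1 ∧ ν2 = m ∧ ν3 = m := by
  have hm3 : m ≤ ν3 := by omega
  omega

theorem stmt_16_general (μ1 μ2 μ3 δ1 δ2 δ3 ν1 ν2 ν3 : ℤ)
    (hμ1 : 0 ≤ μ1)
    (hT1b : max μ3 μ1 ≤ δ2 ∧ δ2 ≤ μ3 + μ1)
    (hT1c : max μ1 μ2 ≤ δ3 ∧ δ3 ≤ μ1 + μ2)
    (hT2a : δ2 + δ3 ≤ 2 * μ1 + δ1 + 1)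
    (hν1 : ν1 = μ2 + μ3 - δ1) (hν2 : ν2 = μ3 + μ1 - δ2) (hν3 : ν3 = μ1 + μ2 - δ3)
    (h32 : ν3 ≤ ν2) (h21 : ν2 ≤ ν1) :
    (((ν2 < ν1 ∧ ν1 ≤ μ1 + ν2) ∧ ¬(ν1 = ν2 ∧ 1 ≤ ν3) ∧ ¬(ν1 = ν2 ∧ ν3 = 0) ∧ ¬(μ1 + ν2 < ν1)) ∨
     (¬(ν2 < ν1 ∧ ν1 ≤ μ1 + ν2) ∧ (ν1 = ν2 ∧ 1 ≤ ν3) ∧ ¬(ν1 = ν2 ∧ ν3 = 0) ∧ ¬(μ1 + ν2 < ν1)) ∨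
     (¬(ν2 < ν1 ∧ ν1 ≤ μ1 + ν2) ∧ ¬(ν1 = ν2 ∧ 1 ≤ ν3) ∧ (ν1 = ν2 ∧ ν3 = 0) ∧ ¬(μ1 + ν2 < ν1)) ∨
     (¬(ν2 < ν1 ∧ ν1 ≤ μ1 + ν2) ∧ ¬(ν1 = ν2 ∧ 1 ≤ ν3) ∧ ¬(ν1 = ν2 ∧ ν3 = 0) ∧ (μ1 + ν2 < ν1))) ∧
    (μ1 + ν2 < ν1 → ν1 = 2 * μ1 + 1 ∧ ν2 = μ1 ∧ ν3 = μ1) := by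
  have hν2_le : ν2 ≤ μ1 := by
    have := (le_max_left μ3 μ1).trans hT1b.1
    omega
  have hν3_nonneg : 0 ≤ ν3 := by
    have := hT1c.2
    omega
  have hT2a_ν : ν1 ≤ ν2 + ν3 + 1 := by omega
  exact ⟨cases_exactly_one hμ1 hν3_nonneg h21, eq_two_mul_add_one_of_add_lt hν2_le h32 hT2a_ν⟩

theorem stmt_16 (μ1 μ2 μ3 δ1 δ2 δ3 ν1 ν2 ν3 : ℤ)
    (hμ1 : 0 ≤ μ1) (hμ2 : 0 ≤ μ2) (hμ3 : 0 ≤ μ3)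
    (hδ1 : 1 ≤ δ1) (hδ2 : 1 ≤ δ2) (hδ3 : 1 ≤ δ3)
    (hT1a : max μ2 μ3 ≤ δ1 ∧ δ1 ≤ μ2 + μ3)
    (hT1b : max μ3 μ1 ≤ δ2 ∧ δ2 ≤ μ3 + μ1)
    (hT1c : max μ1 μ2 ≤ δ3 ∧ δ3 ≤ μ1 + μ2)
    (hT2a : δ2 + δ3 ≤ 2 * μ1 + δ1 + 1)
    (hT2b : δ3 + δ1 ≤ 2 * μ2 + δ2 + 1)
    (hT2c : δ1 + δ2 ≤ 2 * μ3 + δ3 + 1)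
    (hν1 : ν1 = μ2 + μ3 - δ1) (hν2 : ν2 = μ3 + μ1 - δ2) (hν3 : ν3 = μ1 + μ2 - δ3)
    (h32 : ν3 ≤ ν2) (h21 : ν2 ≤ ν1) :
    (((ν2 < ν1 ∧ ν1 ≤ μ1 + ν2) ∧ ¬(ν1 = ν2 ∧ 1 ≤ ν3) ∧ ¬(ν1 = ν2 ∧ ν3 = 0) ∧ ¬(μ1 + ν2 < ν1)) ∨
     (¬(ν2 < ν1 ∧ ν1 ≤ μ1 + ν2) ∧ (ν1 = ν2 ∧ 1 ≤ ν3) ∧ ¬(ν1 = ν2 ∧ ν3 = 0) ∧ ¬(μ1 + ν2 < ν1)) ∨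
     (¬(ν2 < ν1 ∧ ν1 ≤ μ1 + ν2) ∧ ¬(ν1 = ν2 ∧ 1 ≤ ν3) ∧ (ν1 = ν2 ∧ ν3 = 0) ∧ ¬(μ1 + ν2 < ν1)) ∨
     (¬(ν2 < ν1 ∧ ν1 ≤ μ1 + ν2) ∧ ¬(ν1 = ν2 ∧ 1 ≤ ν3) ∧ ¬(ν1 = ν2 ∧ ν3 = 0) ∧ (μ1 + ν2 < ν1))) ∧
    (μ1 + ν2 < ν1 → ν1 = 2 * μ1 + 1 ∧ ν2 = μ1 ∧ ν3 = μ1) :=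
  stmt_16_general μ1 μ2 μ3 δ1 δ2 δ3 ν1 ν2 ν3 hμ1 hT1b hT1c hT2a hν1 hν2 hν3 h32 h21
end
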